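/- arXiv:2308.13025 — 3 statements merged into one kernel-verified Lean document; each statement's English description precedes it below -/
import Mathlib

section
/- Let m be a positive integer, r ∈ {0, 1, …, m}, and suppose A_1, …, A_m ∈ O(l) satisfy A_iA_j + A_jA_i = 2η_{ij}E_l for all i, j, where (η_{ij}) := J_{r,m−r}. Then there exist B_1, …, B_{m+2} ∈ O(2l) satisfying B_iB_j + B_jB_i = 2η'_{ij}E_{2l} for all i, j ∈ {1, …, m+2}, where (η'_{ij}) := J_{r+1,(m+2)−(r+1)}. -/
/-!
Take `B₁ = ZX ⊗ E_l`, `B_{k+1} = Z ⊗ A_k` and `B_{m+2} = X ⊗ E_l`, where `X`, `Z` are the real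
Pauli matrices and `ZX = !![0, 1; -1, 0]`. Since `Z² = X² = 1`, `(ZX)² = -1` and `Z`, `X`, `ZX`
pairwise anticommute, the new generator `B₁` squares to `-1` and `B_{m+2}` to `1`, both
anticommuting with the rest, while the `Z ⊗ A_k` inherit the relations of the `A_k`. Kronecker
products of orthogonal matrices are orthogonal, and `Fin 2 × Fin l ≃ Fin (2 * l)` transports
everything to `O(2l)`.
-/

open Matrix

noncomputable section

/-- Entries of the signature matrix `J_{r,m-r}`, with 1-based indices:
`η_{ii} = -1` for `1 ≤ i ≤ r` and `η_{ii} = 1` for `r < i`; off-diagonal entries vanish. -/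
def cliffEta (r i j : ℕ) : ℝ :=
  if i = j then (if i ≤ r then -1 else 1) else 0

/-- The matrix `J_{s,n-s} = diag(-E_s, E_{n-s})`. -/
def psJ (n s : ℕ) : Matrix (Fin n) (Fin n) ℝ :=
  Matrix.diagonal fun i => if (i : ℕ) < s then (-1 : ℝ) else 1

/-- The pseudo-inner product `⟨u, v⟩ = uᵀ J_{s,n-s} v` of `ℝ^n_s`. -/
def psInner (n s : ℕ) (u v : Fin n → ℝ) : ℝ :=
  u ⬝ᵥ ((psJ n s) *ᵥ v)

/-- A Clifford system of signature `(m, r)` on `ℝ^{2l}_s`, indexed by `1, …, m`: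
each `P i` is symmetric with respect to the pseudo-inner product, and
`P i * P j + P j * P i = 2 η_{ij} E_{2l}`. -/
def IsCliffordSystem (l s m r : ℕ)
    (P : ℕ → Matrix (Fin (2 * l)) (Fin (2 * l)) ℝ) : Prop :=
  (∀ i ∈ Finset.Icc 1 m, (P i)ᵀ = psJ (2 * l) s * P i * psJ (2 * l) s) ∧
  (∀ i ∈ Finset.Icc 1 m, ∀ j ∈ Finset.Icc 1 m,
    P i * P j + P j * P i
      = (2 * cliffEta r i j) • (1 : Matrix (Fin (2 * l)) (Fin (2 * l)) ℝ))

open scoped Kronecker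

lemma cliffEta_of_ne {r i j : ℕ} (h : i ≠ j) : cliffEta r i j = 0 := if_neg h

lemma cliffEta_succ_succ (r i j : ℕ) : cliffEta (r + 1) (i + 1) (j + 1) = cliffEta r i j := by
  simp [cliffEta]

lemma cliffEta_self_of_le {r i : ℕ} (h : i ≤ r) : cliffEta r i i = -1 := by
  simp [cliffEta, h]

lemma cliffEta_self_of_lt {r i : ℕ} (h : r < i) : cliffEta r i i = 1 := by
  simp [cliffEta, h.not_ge]

lemma eq_one_or_exists_eq_succ_of_mem_Icc {n k : ℕ} (hk : k ∈ Finset.Icc 1 (n + 1)) :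
    k = 1 ∨ ∃ k' ∈ Finset.Icc 1 n, k = k' + 1 := by
  simp only [Finset.mem_Icc] at hk ⊢
  rcases eq_or_ne k 1 with h | h
  · exact .inl h
  · exact .inr ⟨k - 1, by omega, by omega⟩

lemma eq_succ_or_mem_Icc_of_mem_Icc {n k : ℕ} (hk : k ∈ Finset.Icc 1 (n + 1)) :
    k = n + 1 ∨ k ∈ Finset.Icc 1 n := by
  simp only [Finset.mem_Icc] at hk ⊢
  omega

section Families

variable {R : Type*}

def consFamily (Y : R) (X : ℕ → R) (k : ℕ) : R :=
  if k = 1 then Y else X (k - 1)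

def snocFamily (n : ℕ) (X : ℕ → R) (Y : R) (k : ℕ) : R :=
  if k = n + 1 then Y else X k

@[simp]
lemma consFamily_one (Y : R) (X : ℕ → R) : consFamily Y X 1 = Y := if_pos rfl

lemma consFamily_succ (Y : R) (X : ℕ → R) {n k : ℕ} (hk : k ∈ Finset.Icc 1 n) :
    consFamily Y X (k + 1) = X k := by
  simp only [Finset.mem_Icc] at hk
  simp [consFamily, Nat.one_le_iff_ne_zero.mp hk.1]

@[simp]
lemma snocFamily_last (n : ℕ) (X : ℕ → R) (Y : R) : snocFamily n X Y (n + 1) = Y := if_pos rfl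

lemma snocFamily_of_mem {n k : ℕ} (X : ℕ → R) (Y : R) (hk : k ∈ Finset.Icc 1 n) :
    snocFamily n X Y k = X k := by
  simp only [Finset.mem_Icc] at hk
  exact if_neg (by omega)

lemma forall_consFamily {p : R → Prop} {n : ℕ} {Y : R} {X : ℕ → R} (hY : p Y)
    (hX : ∀ k ∈ Finset.Icc 1 n, p (X k)) : ∀ k ∈ Finset.Icc 1 (n + 1), p (consFamily Y X k) := by
  intro k hk
  rcases eq_one_or_exists_eq_succ_of_mem_Icc hk with rfl | ⟨k, hk', rfl⟩
  · rwa [consFamily_one]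
  · rw [consFamily_succ Y X hk']
    exact hX k hk'

lemma forall_snocFamily {p : R → Prop} {n : ℕ} {X : ℕ → R} {Y : R}
    (hX : ∀ k ∈ Finset.Icc 1 n, p (X k)) (hY : p Y) :
    ∀ k ∈ Finset.Icc 1 (n + 1), p (snocFamily n X Y k) := by
  intro k hk
  rcases eq_succ_or_mem_Icc_of_mem_Icc hk with rfl | hk
  · rwa [snocFamily_last]
  · rw [snocFamily_of_mem X Y hk]
    exact hX k hk

end Families

def IsCliffordFamily {R : Type*} [Ring R] [Algebra ℝ R] (n r : ℕ) (X : ℕ → R) : Prop :=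
  ∀ i ∈ Finset.Icc 1 n, ∀ j ∈ Finset.Icc 1 n, X i * X j + X j * X i = (2 * cliffEta r i j) • 1

namespace IsCliffordFamily

variable {R S : Type*} [Ring R] [Algebra ℝ R] [Ring S] [Algebra ℝ S] {n r : ℕ} {X : ℕ → R}

lemma map (hX : IsCliffordFamily n r X) (f : R →ₐ[ℝ] S) : IsCliffordFamily n r (f ∘ X) := by
  intro i hi j hj
  simp only [Function.comp_apply, ← map_mul, ← map_add, hX i hi j hj, map_smul, map_one]

lemma cons (hX : IsCliffordFamily n r X) {Y : R} (hY : Y * Y = -1)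
    (hYX : ∀ k ∈ Finset.Icc 1 n, Y * X k + X k * Y = 0) :
    IsCliffordFamily (n + 1) (r + 1) (consFamily Y X) := by
  intro i hi j hj
  rcases eq_one_or_exists_eq_succ_of_mem_Icc hi with rfl | ⟨i, hi', rfl⟩ <;>
    rcases eq_one_or_exists_eq_succ_of_mem_Icc hj with rfl | ⟨j, hj', rfl⟩
  · rw [consFamily_one, hY, cliffEta_self_of_le (Nat.le_add_left 1 r)]
    module
  · rw [consFamily_one, consFamily_succ Y X hj', hYX j hj',
      cliffEta_of_ne (by grind), mul_zero, zero_smul]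
  · rw [consFamily_one, consFamily_succ Y X hi', add_comm, hYX i hi',
      cliffEta_of_ne (by grind), mul_zero, zero_smul]
  · rw [consFamily_succ Y X hi', consFamily_succ Y X hj', cliffEta_succ_succ, hX i hi' j hj']

lemma snoc (hX : IsCliffordFamily n r X) (hr : r ≤ n) {Y : R} (hY : Y * Y = 1)
    (hYX : ∀ k ∈ Finset.Icc 1 n, Y * X k + X k * Y = 0) :
    IsCliffordFamily (n + 1) r (snocFamily n X Y) := by
  intro i hi j hj
  rcases eq_succ_or_mem_Icc_of_mem_Icc hi with rfl | hi' <;>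
    rcases eq_succ_or_mem_Icc_of_mem_Icc hj with rfl | hj'
  · rw [snocFamily_last, hY, cliffEta_self_of_lt (Nat.lt_succ_of_le hr)]
    module
  · rw [snocFamily_last, snocFamily_of_mem X Y hj', hYX j hj',
      cliffEta_of_ne (by grind), mul_zero, zero_smul]
  · rw [snocFamily_last, snocFamily_of_mem X Y hi', add_comm, hYX i hi',
      cliffEta_of_ne (by grind), mul_zero, zero_smul]
  · rw [snocFamily_of_mem X Y hi', snocFamily_of_mem X Y hj', hX i hi' j hj']

end IsCliffordFamily

section Kronecker

variable {α n p : Type*} [CommSemiring α] [Fintype n] [Fintype p]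

lemma kronecker_anticomm_kronecker_same_left (P : Matrix n n α) (Q Q' : Matrix p p α) :
    P ⊗ₖ Q * P ⊗ₖ Q' + P ⊗ₖ Q' * P ⊗ₖ Q = (P * P) ⊗ₖ (Q * Q' + Q' * Q) := by
  rw [← mul_kronecker_mul, ← mul_kronecker_mul, ← kronecker_add]

lemma kronecker_one_mul_kronecker_one [DecidableEq p] (P P' : Matrix n n α) :
    P ⊗ₖ (1 : Matrix p p α) * P' ⊗ₖ 1 = (P * P') ⊗ₖ 1 := by
  rw [← mul_kronecker_mul, one_mul]

lemma kronecker_one_anticomm_kronecker_eq_zero [DecidableEq p] {P P' : Matrix n n α}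
    (h : P * P' + P' * P = 0) (Q : Matrix p p α) :
    P ⊗ₖ (1 : Matrix p p α) * P' ⊗ₖ Q + P' ⊗ₖ Q * P ⊗ₖ 1 = 0 := by
  rw [← mul_kronecker_mul, ← mul_kronecker_mul, one_mul, mul_one, ← add_kronecker, h,
    zero_kronecker]

lemma transpose_mul_self_kronecker [DecidableEq n] [DecidableEq p] {P : Matrix n n α}
    {Q : Matrix p p α} (hP : Pᵀ * P = 1) (hQ : Qᵀ * Q = 1) : (P ⊗ₖ Q)ᵀ * (P ⊗ₖ Q) = 1 := by
  rw [← kroneckerMap_transpose, ← mul_kronecker_mul, hP, hQ, one_kronecker_one]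

lemma transpose_mul_self_reindex [DecidableEq n] {m : Type*} [Fintype m] [DecidableEq m]
    (e : n ≃ m) {M : Matrix n n α} (hM : Mᵀ * M = 1) :
    (reindexAlgEquiv α α e M)ᵀ * reindexAlgEquiv α α e M = 1 := by
  rw [coe_reindexAlgEquiv, transpose_reindex, ← coe_reindexAlgEquiv α, ← map_mul, hM, map_one]

lemma IsCliffordFamily.kronecker_left [DecidableEq n] [DecidableEq p] {m r : ℕ}
    {X : ℕ → Matrix p p ℝ} (hX : IsCliffordFamily m r X) {P : Matrix n n ℝ} (hP : P * P = 1) :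
    IsCliffordFamily m r (fun k => P ⊗ₖ X k) := by
  intro i hi j hj
  rw [kronecker_anticomm_kronecker_same_left, hP, hX i hi j hj, kronecker_smul, one_kronecker_one]

end Kronecker

def pauliX : Matrix (Fin 2) (Fin 2) ℝ := !![0, 1; 1, 0]

def pauliZ : Matrix (Fin 2) (Fin 2) ℝ := !![1, 0; 0, -1]

def pauliZX : Matrix (Fin 2) (Fin 2) ℝ := !![0, 1; -1, 0]

lemma pauliX_mul_self : pauliX * pauliX = 1 := by simp [pauliX, one_fin_two]

lemma pauliZ_mul_self : pauliZ * pauliZ = 1 := by simp [pauliZ, one_fin_two]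

lemma pauliZX_mul_self : pauliZX * pauliZX = -1 := by simp [pauliZX, one_fin_two]

lemma pauliX_anticomm_pauliZ : pauliX * pauliZ + pauliZ * pauliX = 0 := by
  simp [pauliX, pauliZ, ← Matrix.ext_iff, Fin.forall_fin_two]

lemma pauliZX_anticomm_pauliZ : pauliZX * pauliZ + pauliZ * pauliZX = 0 := by
  simp [pauliZX, pauliZ, ← Matrix.ext_iff, Fin.forall_fin_two]

lemma pauliX_anticomm_pauliZX : pauliX * pauliZX + pauliZX * pauliX = 0 := by
  simp [pauliX, pauliZX, ← Matrix.ext_iff, Fin.forall_fin_two]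

lemma transpose_pauliX : pauliXᵀ = pauliX := by
  simp [pauliX, ← Matrix.ext_iff, Fin.forall_fin_two]

lemma transpose_pauliZ : pauliZᵀ = pauliZ := by
  simp [pauliZ, ← Matrix.ext_iff, Fin.forall_fin_two]

lemma transpose_pauliZX : pauliZXᵀ = -pauliZX := by
  simp [pauliZX, ← Matrix.ext_iff, Fin.forall_fin_two]

theorem step_up_signature_general (m r l : ℕ) (hr : r ≤ m)
    (A : ℕ → Matrix (Fin l) (Fin l) ℝ)
    (hAo : ∀ i ∈ Finset.Icc 1 m, (A i)ᵀ * A i = 1)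
    (hAc : ∀ i ∈ Finset.Icc 1 m, ∀ j ∈ Finset.Icc 1 m,
      A i * A j + A j * A i = (2 * cliffEta r i j) • (1 : Matrix (Fin l) (Fin l) ℝ)) :
    ∃ B : ℕ → Matrix (Fin (2 * l)) (Fin (2 * l)) ℝ,
      (∀ i ∈ Finset.Icc 1 (m + 2), (B i)ᵀ * B i = 1) ∧
      (∀ i ∈ Finset.Icc 1 (m + 2), ∀ j ∈ Finset.Icc 1 (m + 2),
        B i * B j + B j * B i
          = (2 * cliffEta (r + 1) i j) • (1 : Matrix (Fin (2 * l)) (Fin (2 * l)) ℝ)) := by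
  let X : ℕ → Matrix (Fin 2 × Fin l) (Fin 2 × Fin l) ℝ := fun k => pauliZ ⊗ₖ A k
  let C := snocFamily (m + 1) (consFamily (pauliZX ⊗ₖ 1) X) (pauliX ⊗ₖ 1)
  have hX : IsCliffordFamily m r X := IsCliffordFamily.kronecker_left hAc pauliZ_mul_self
  have hC : IsCliffordFamily (m + 2) (r + 1) C := by
    refine (hX.cons ?_ fun k _ => ?_).snoc (by omega) ?_ ?_
    · rw [kronecker_one_mul_kronecker_one, pauliZX_mul_self, ← neg_one_smul ℝ 1, smul_kronecker,
        one_kronecker_one, neg_one_smul]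
    · exact kronecker_one_anticomm_kronecker_eq_zero pauliZX_anticomm_pauliZ _
    · rw [kronecker_one_mul_kronecker_one, pauliX_mul_self, one_kronecker_one]
    · exact forall_consFamily (p := fun M => pauliX ⊗ₖ 1 * M + M * pauliX ⊗ₖ 1 = 0)
        (kronecker_one_anticomm_kronecker_eq_zero pauliX_anticomm_pauliZX _)
        fun k _ => kronecker_one_anticomm_kronecker_eq_zero pauliX_anticomm_pauliZ _
  have hC_orth : ∀ k ∈ Finset.Icc 1 (m + 2), (C k)ᵀ * C k = 1 := by
    refine forall_snocFamily (n := m + 1) (p := fun M => Mᵀ * M = 1)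
      (forall_consFamily (p := fun M => Mᵀ * M = 1) ?_ fun k hk => ?_) ?_
    · exact transpose_mul_self_kronecker
        (by rw [transpose_pauliZX, neg_mul, pauliZX_mul_self, neg_neg]) (by simp)
    · exact transpose_mul_self_kronecker (by rw [transpose_pauliZ, pauliZ_mul_self]) (hAo k hk)
    · exact transpose_mul_self_kronecker (by rw [transpose_pauliX, pauliX_mul_self]) (by simp)
  exact ⟨reindexAlgEquiv ℝ ℝ finProdFinEquiv ∘ C,
    fun k hk => transpose_mul_self_reindex _ (hC_orth k hk),
    hC.map (reindexAlgEquiv ℝ ℝ finProdFinEquiv).toAlgHom⟩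

/-- from a family for `(m, r)` on `O(l)` one obtains a family for
`(m+2, r+1)` on `O(2l)`. -/
theorem step_up_signature (m r l : ℕ) (hm : 0 < m) (hr : r ≤ m) (hl : 0 < l)
    (A : ℕ → Matrix (Fin l) (Fin l) ℝ)
    (hAo : ∀ i ∈ Finset.Icc 1 m, (A i)ᵀ * A i = 1)
    (hAc : ∀ i ∈ Finset.Icc 1 m, ∀ j ∈ Finset.Icc 1 m,
      A i * A j + A j * A i = (2 * cliffEta r i j) • (1 : Matrix (Fin l) (Fin l) ℝ)) :
    ∃ B : ℕ → Matrix (Fin (2 * l)) (Fin (2 * l)) ℝ,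
      (∀ i ∈ Finset.Icc 1 (m + 2), (B i)ᵀ * B i = 1) ∧
      (∀ i ∈ Finset.Icc 1 (m + 2), ∀ j ∈ Finset.Icc 1 (m + 2),
        B i * B j + B j * B i
          = (2 * cliffEta (r + 1) i j) • (1 : Matrix (Fin (2 * l)) (Fin (2 * l)) ℝ)) :=
  step_up_signature_general m r l hr A hAo hAc
end
end

section
/- Let m ≥ 2 be an integer, r ∈ {0, 1, …, m}, and suppose A_1, …, A_m ∈ O(l) satisfy A_iA_j + A_jA_i = 2η_{ij}E_l for all i, j, where (η_{ij}) := J_{r,m−r}. Let d be a positive integer, let K_{2d} denote the 2d×2d exchange matrix (with entries (K_{2d})_{ab} = δ_{a+b,2d+1}), and define P_i := K_{2d} ⊗ A_i for i ∈ {1, …, r} and P_i := E_{2d} ⊗ A_i for i ∈ {r+1, …, m} (Kronecker products). Then P_1, …, P_m is a Clifford system of signature (m, r) on ℝ^{2dl}_{dl}: each P_i is symmetric with respect to the pseudo-inner product of ℝ^{2dl}_{dl}, and P_iP_j + P_jP_i = 2η_{ij}E_{2dl} for all i, j. -/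
open Matrix

noncomputable section

open Kronecker

/-- The `n × n` exchange matrix, with `(K_n)_{ab} = δ_{a+b, n+1}` in 1-based indexing. -/
def exchMat (n : ℕ) : Matrix (Fin n) (Fin n) ℝ :=
  Matrix.of fun a b => if (a : ℕ) + (b : ℕ) + 1 = n then 1 else 0

/-!
Write `P_i = B_i ⊗ A_i` with `B_i ∈ {K_{2d}, E_{2d}}`. The `B_i` commute pairwise and square to
`E_{2d}`, so `P_iP_j + P_jP_i = B_iB_j ⊗ (A_iA_j + A_jA_i)`, which vanishes for `i ≠ j` and is
`2η_{ii} E` for `i = j`. Orthogonality together with `A_i² = η_{ii} E_l` gives `A_iᵀ = η_{ii} A_i`,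
and `J_{dl,dl} = J_{d,d} ⊗ E_l`, where `J_{d,d}` anticommutes with `K_{2d}`: the signs produced by
transposing `A_i` and by conjugating `B_i` with `J_{d,d}` agree, which is the symmetry of `P_i`.
-/

section

variable {m n α : Type*} [Fintype m] [Fintype n] [CommRing α]

lemma kronecker_mul_add_mul_kronecker {B B' : Matrix m m α} {A A' : Matrix n n α}
    (hB : B * B' = B' * B) :
    B ⊗ₖ A * B' ⊗ₖ A' + B' ⊗ₖ A' * B ⊗ₖ A = (B * B') ⊗ₖ (A * A' + A' * A) := by
  rw [← mul_kronecker_mul, ← mul_kronecker_mul, ← hB, kronecker_add]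

variable [DecidableEq n]

lemma transpose_eq_smul_of_mul_self {A : Matrix n n α} {c : α} (hc : c * c = 1)
    (hA : Aᵀ * A = 1) (hsq : A * A = c • 1) : Aᵀ = c • A :=
  calc Aᵀ = Aᵀ * (c • (A * A)) := by rw [hsq, smul_smul, hc, one_smul, mul_one]
    _ = c • A := by rw [mul_smul_comm, ← Matrix.mul_assoc, hA, Matrix.one_mul]

lemma transpose_kronecker_eq_conj {B S : Matrix m m α} {A : Matrix n n α} {c : α}
    (hc : c * c = 1) (hB : Bᵀ = c • (S * B * S)) (hA : Aᵀ = c • A) :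
    (B ⊗ₖ A)ᵀ = S ⊗ₖ 1 * B ⊗ₖ A * S ⊗ₖ 1 := by
  rw [← kroneckerMap_transpose, hB, hA, smul_kronecker, kronecker_smul, smul_smul, hc, one_smul,
    ← mul_kronecker_mul, ← mul_kronecker_mul, one_mul, mul_one]

end

lemma cliffEta_self (r i : ℕ) : cliffEta r i i = if i ≤ r then -1 else 1 :=
  if_pos rfl

lemma cliffEta_self_mul_self (r i : ℕ) : cliffEta r i i * cliffEta r i i = 1 := by
  rw [cliffEta_self]
  split_ifs <;> norm_num

lemma exchMat_eq_permMatrix (n : ℕ) : exchMat n = Fin.revPerm.permMatrix ℝ := by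
  ext a b
  have hrev : (a : ℕ) + b + 1 = n ↔ a.rev = b := by
    rw [Fin.ext_iff, Fin.val_rev]
    omega
  simp [exchMat, PEquiv.toMatrix_apply, hrev]

lemma exchMat_transpose (n : ℕ) : (exchMat n)ᵀ = exchMat n := by
  rw [exchMat_eq_permMatrix, transpose_permMatrix]
  rfl

lemma exchMat_mul_self (n : ℕ) : exchMat n * exchMat n = 1 := by
  rw [exchMat_eq_permMatrix, ← permMatrix_mul,
    show Fin.revPerm * Fin.revPerm = 1 from Equiv.ext Fin.rev_rev, permMatrix_one]

lemma psJ_mul_self (n s : ℕ) : psJ n s * psJ n s = 1 := by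
  rw [psJ, diagonal_mul_diagonal, ← diagonal_one]
  congr 1
  ext i
  split_ifs <;> norm_num

lemma psJ_mul_exchMat_mul_psJ (d : ℕ) :
    psJ (2 * d) d * exchMat (2 * d) * psJ (2 * d) d = -exchMat (2 * d) := by
  ext a b
  rw [neg_apply]
  simp only [psJ, exchMat, mul_diagonal, diagonal_mul, of_apply]
  split_ifs <;> first | omega | norm_num

lemma psJ_mul_eq_reindex_kronecker (n s l : ℕ) :
    psJ (n * l) (s * l)
      = reindex finProdFinEquiv finProdFinEquiv (psJ n s ⊗ₖ (1 : Matrix (Fin l) (Fin l) ℝ)) := by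
  rw [psJ, psJ, ← diagonal_one, diagonal_kronecker_diagonal, reindex_apply,
    submatrix_diagonal_equiv]
  congr 1
  ext i
  have hl : 0 < l := Nat.pos_of_mul_pos_left (Nat.zero_lt_of_lt i.isLt)
  simp [Nat.div_lt_iff_lt_mul hl]

def cliffFactor (r d i : ℕ) : Matrix (Fin (2 * d)) (Fin (2 * d)) ℝ :=
  if i ≤ r then exchMat (2 * d) else 1

lemma cliffFactor_mul_self (r d i : ℕ) : cliffFactor r d i * cliffFactor r d i = 1 := by
  unfold cliffFactor
  split_ifs
  · exact exchMat_mul_self _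
  · exact mul_one 1

lemma cliffFactor_mul_comm (r d i j : ℕ) :
    cliffFactor r d i * cliffFactor r d j = cliffFactor r d j * cliffFactor r d i := by
  unfold cliffFactor
  split_ifs <;> simp only [Matrix.mul_one, Matrix.one_mul]

lemma cliffFactor_transpose (r d i : ℕ) :
    (cliffFactor r d i)ᵀ
      = cliffEta r i i • (psJ (2 * d) d * cliffFactor r d i * psJ (2 * d) d) := by
  rw [cliffEta_self, cliffFactor]
  split_ifs
  · rw [exchMat_transpose, psJ_mul_exchMat_mul_psJ, neg_one_smul, neg_neg]
  · rw [transpose_one, Matrix.mul_one, psJ_mul_self, one_smul]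

theorem kronecker_clifford_system_general (m r l d : ℕ)
    (A : ℕ → Matrix (Fin l) (Fin l) ℝ)
    (hAo : ∀ i ∈ Finset.Icc 1 m, (A i)ᵀ * A i = 1)
    (hAc : ∀ i ∈ Finset.Icc 1 m, ∀ j ∈ Finset.Icc 1 m,
      A i * A j + A j * A i = (2 * cliffEta r i j) • (1 : Matrix (Fin l) (Fin l) ℝ))
    (P : ℕ → Matrix (Fin (2 * d * l)) (Fin (2 * d * l)) ℝ)
    (hP : ∀ i, P i = Matrix.reindex finProdFinEquiv finProdFinEquiv
      ((if i ≤ r then exchMat (2 * d) else (1 : Matrix (Fin (2 * d)) (Fin (2 * d)) ℝ)) ⊗ₖ A i)) :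
    (∀ i ∈ Finset.Icc 1 m,
      (P i)ᵀ = psJ (2 * d * l) (d * l) * P i * psJ (2 * d * l) (d * l)) ∧
    (∀ i ∈ Finset.Icc 1 m, ∀ j ∈ Finset.Icc 1 m,
      P i * P j + P j * P i
        = (2 * cliffEta r i j) • (1 : Matrix (Fin (2 * d * l)) (Fin (2 * d * l)) ℝ)) := by
  have hP' : ∀ i, P i = reindexAlgEquiv ℝ ℝ finProdFinEquiv (cliffFactor r d i ⊗ₖ A i) := hP
  have hAsq : ∀ i ∈ Finset.Icc 1 m, A i * A i = cliffEta r i i • 1 := fun i hi => by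
    have h := hAc i hi i hi
    rw [← two_smul ℝ (A i * A i), mul_smul] at h
    exact smul_right_injective _ two_ne_zero h
  refine ⟨fun i hi => ?_, fun i hi j hj => ?_⟩
  · rw [hP', psJ_mul_eq_reindex_kronecker, coe_reindexAlgEquiv, transpose_reindex,
      ← coe_reindexAlgEquiv ℝ ℝ, ← map_mul, ← map_mul]
    exact congrArg _ (transpose_kronecker_eq_conj (cliffEta_self_mul_self r i)
      (cliffFactor_transpose r d i)
      (transpose_eq_smul_of_mul_self (cliffEta_self_mul_self r i) (hAo i hi) (hAsq i hi)))
  · rw [hP', hP', ← map_mul, ← map_mul, ← map_add,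
      kronecker_mul_add_mul_kronecker (cliffFactor_mul_comm r d i j), hAc i hi j hj]
    rcases eq_or_ne i j with rfl | hij
    · rw [cliffFactor_mul_self, kronecker_smul, one_kronecker_one, map_smul, map_one]
    · simp [cliffEta, hij]

/-- given an anticommuting orthogonal family `A_1, …, A_m ∈ O(l)` of
signature `(m, r)` and a positive integer `d`, the matrices
`P_i = K_{2d} ⊗ A_i` (for `1 ≤ i ≤ r`) and `P_i = E_{2d} ⊗ A_i` (for `r < i ≤ m`)
form a Clifford system of signature `(m, r)` on `ℝ^{2dl}_{dl}`
(identifying `Fin (2d) × Fin l` with `Fin (2dl)` row-major via `finProdFinEquiv`). -/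
theorem kronecker_clifford_system (m r l d : ℕ) (hm : 2 ≤ m) (hr : r ≤ m)
    (hl : 0 < l) (hd : 0 < d)
    (A : ℕ → Matrix (Fin l) (Fin l) ℝ)
    (hAo : ∀ i ∈ Finset.Icc 1 m, (A i)ᵀ * A i = 1)
    (hAc : ∀ i ∈ Finset.Icc 1 m, ∀ j ∈ Finset.Icc 1 m,
      A i * A j + A j * A i = (2 * cliffEta r i j) • (1 : Matrix (Fin l) (Fin l) ℝ))
    (P : ℕ → Matrix (Fin (2 * d * l)) (Fin (2 * d * l)) ℝ)
    (hP : ∀ i, P i = Matrix.reindex finProdFinEquiv finProdFinEquiv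
      ((if i ≤ r then exchMat (2 * d) else (1 : Matrix (Fin (2 * d)) (Fin (2 * d)) ℝ)) ⊗ₖ A i)) :
    (∀ i ∈ Finset.Icc 1 m,
      (P i)ᵀ = psJ (2 * d * l) (d * l) * P i * psJ (2 * d * l) (d * l)) ∧
    (∀ i ∈ Finset.Icc 1 m, ∀ j ∈ Finset.Icc 1 m,
      P i * P j + P j * P i
        = (2 * cliffEta r i j) • (1 : Matrix (Fin (2 * d * l)) (Fin (2 * d * l)) ℝ)) :=
  kronecker_clifford_system_general m r l d A hAo hAc P hP
end
end

section
/- Let P_1, …, P_m be a Clifford system of signature (m, r) on ℝ^{2l}_s with m ≡ 0 (mod 4), r ≡ 0 (mod 2), and s ≤ 2l − 1, and set P := P_1P_2⋯P_m. Then for each ε ∈ {−1, 1}, if E_ε(P) ∩ S^{2l−1}_s is non-empty, then E_ε(P) ∩ S^{2l−1}_s is path-connected. -/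
/-!
`Q := P₁P₂` commutes with `P = P₁ ⋯ P_m`, because `P₁` and `P₂` each anticommute with every
`P_j`, `j ≥ 3`. It preserves `⟨·,·⟩` (here `r` even gives `η₁₁η₂₂ = 1`) and `⟨z, Qz⟩ = 0`, so
`t ↦ cos t • x + sin t • Qx` joins each `x ∈ E_ε(P) ∩ S` to `-x` inside `E_ε(P) ∩ S`.
Points with `⟨x, y⟩ ≥ 0` are joined by the normalized segment, whose pseudo-norm
`(1 - t)² + 2t(1 - t)⟨x, y⟩ + t²` stays positive; otherwise join `x` to `-y`, then `-y` to `y`.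
-/

open Matrix

noncomputable section

section PseudoSphere

variable {V : Type*} [AddCommGroup V] [Module ℝ V]

def pseudoSphere (B : LinearMap.BilinForm ℝ V) (W : Submodule ℝ V) : Set V :=
  {z | z ∈ W ∧ B z z = 1}

variable {B : LinearMap.BilinForm ℝ V} {W : Submodule ℝ V}

theorem mem_pseudoSphere {z : V} : z ∈ pseudoSphere B W ↔ z ∈ W ∧ B z z = 1 := Iff.rfl

theorem neg_mem_pseudoSphere {z : V} (hz : z ∈ pseudoSphere B W) : -z ∈ pseudoSphere B W :=
  ⟨W.neg_mem hz.1, by simpa using hz.2⟩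

theorem LinearMap.BilinForm.IsSymm.apply_smul_add_smul_self (hB : B.IsSymm) (a b : ℝ)
    (u v : V) :
    B (a • u + b • v) (a • u + b • v) = a ^ 2 * B u u + 2 * a * b * B u v + b ^ 2 * B v v := by
  simp only [map_add, map_smul, LinearMap.add_apply, LinearMap.smul_apply, smul_eq_mul,
    hB.eq v u]
  ring

variable [TopologicalSpace V] [ContinuousAdd V] [ContinuousSMul ℝ V]

theorem joinedIn_neg_of_apply_eq_zero (hB : B.IsSymm) {x y : V} (hx : x ∈ pseudoSphere B W)
    (hy : y ∈ pseudoSphere B W) (hxy : B x y = 0) : JoinedIn (pseudoSphere B W) x (-x) := by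
  refine JoinedIn.ofLine (f := fun t => Real.cos (Real.pi * t) • x + Real.sin (Real.pi * t) • y)
    (by fun_prop) (by simp) (by simp) ?_
  rintro _ ⟨t, -, rfl⟩
  refine ⟨W.add_mem (W.smul_mem _ hx.1) (W.smul_mem _ hy.1), ?_⟩
  rw [hB.apply_smul_add_smul_self, hx.2, hy.2, hxy]
  nlinarith [Real.sin_sq_add_cos_sq (Real.pi * t)]

theorem joinedIn_of_apply_nonneg (hB : B.IsSymm) {x y : V} (hx : x ∈ pseudoSphere B W)
    (hy : y ∈ pseudoSphere B W) (hxy : 0 ≤ B x y) : JoinedIn (pseudoSphere B W) x y := by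
  -- the `B`-square of `(1 - t) • x + t • y`, positive on `[0, 1]`
  set g : ℝ → ℝ := fun t => (1 - t) ^ 2 + 2 * (1 - t) * t * B x y + t ^ 2 with hg
  have hg_pos : ∀ t ∈ unitInterval, 0 < g t := fun t ⟨ht₀, ht₁⟩ => by
    nlinarith [mul_nonneg (mul_nonneg (sub_nonneg.2 ht₁) ht₀) hxy, sq_nonneg (1 - 2 * t)]
  refine JoinedIn.ofLine (f := fun t => (√(g t))⁻¹ • ((1 - t) • x + t • y)) ?_ (by simp [hg])
    (by simp [hg]) ?_
  · refine ContinuousOn.smul (ContinuousOn.inv₀ (by fun_prop) fun t ht => ?_) (by fun_prop)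
    exact (Real.sqrt_pos.2 (hg_pos t ht)).ne'
  · rintro _ ⟨t, ht, rfl⟩
    refine ⟨W.smul_mem _ (W.add_mem (W.smul_mem _ hx.1) (W.smul_mem _ hy.1)), ?_⟩
    rw [map_smul, map_smul, LinearMap.smul_apply, hB.apply_smul_add_smul_self, hx.2, hy.2]
    have hgt : (1 - t) ^ 2 * 1 + 2 * (1 - t) * t * B x y + t ^ 2 * 1 = g t := by ring
    rw [hgt, smul_eq_mul, smul_eq_mul, ← mul_assoc, ← mul_inv, Real.mul_self_sqrt (hg_pos t ht).le]
    exact inv_mul_cancel₀ (hg_pos t ht).ne'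

theorem isPathConnected_pseudoSphere (hB : B.IsSymm) (hne : (pseudoSphere B W).Nonempty)
    (horth : ∀ x ∈ pseudoSphere B W, ∃ y ∈ pseudoSphere B W, B x y = 0) :
    IsPathConnected (pseudoSphere B W) := by
  obtain ⟨x₀, hx₀⟩ := hne
  refine ⟨x₀, hx₀, fun {y} hy => ?_⟩
  rcases le_or_gt 0 (B x₀ y) with hxy | hxy
  · exact joinedIn_of_apply_nonneg hB hx₀ hy hxy
  · obtain ⟨z, hz, hyz⟩ := horth y hy
    have hx₀_neg : 0 ≤ B x₀ (-y) := by simpa using hxy.le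
    simpa using (joinedIn_of_apply_nonneg hB hx₀ (neg_mem_pseudoSphere hy) hx₀_neg).trans
      (joinedIn_neg_of_apply_eq_zero hB (neg_mem_pseudoSphere hy) (neg_mem_pseudoSphere hz)
        (by simpa using hyz))

end PseudoSphere

section PseudoEuclidean

variable {n s : ℕ}

theorem psJ_transpose : (psJ n s)ᵀ = psJ n s := diagonal_transpose _

theorem psJ_mul_psJ : psJ n s * psJ n s = 1 := by
  rw [psJ, diagonal_mul_diagonal, ← diagonal_one]
  congr 1 with i
  split_ifs <;> norm_num

theorem psJ_mul_psJ_mul (A : Matrix (Fin n) (Fin n) ℝ) : psJ n s * (psJ n s * A) = A := by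
  rw [← Matrix.mul_assoc, psJ_mul_psJ, Matrix.one_mul]

theorem isSymm_toBilin'_psJ : (psJ n s).toBilin'.IsSymm :=
  isSymm_toBilin'_iff_isSymm.2 psJ_transpose

theorem toBilin'_psJ_eq_psInner (u v : Fin n → ℝ) : (psJ n s).toBilin' u v = psInner n s u v :=
  toBilin'_apply' _ u v

end PseudoEuclidean

theorem Matrix.toBilin'_self_eq_zero_of_transpose_eq_neg {ι : Type*} [Fintype ι] [DecidableEq ι]
    {A : Matrix ι ι ℝ} (hA : Aᵀ = -A) (z : ι → ℝ) : A.toBilin' z z = 0 := by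
  have h : A.toBilin' z z = -A.toBilin' z z := by
    conv_lhs => rw [toBilin'_apply', dotProduct_mulVec, ← mulVec_transpose, hA, dotProduct_comm,
      neg_mulVec, dotProduct_neg]
    rw [toBilin'_apply']
  linarith

theorem Matrix.toBilin'_mulVec_mulVec {ι : Type*} [Fintype ι] [DecidableEq ι]
    (A Q : Matrix ι ι ℝ) (u v : ι → ℝ) :
    A.toBilin' (Q *ᵥ u) (Q *ᵥ v) = (Qᵀ * A * Q).toBilin' u v := by
  rw [← toBilin'_comp]; rfl

theorem Matrix.toBilin'_mulVec_right {ι : Type*} [Fintype ι] [DecidableEq ι]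
    (A Q : Matrix ι ι ℝ) (u v : ι → ℝ) :
    A.toBilin' u (Q *ᵥ v) = (A * Q).toBilin' u v := by
  rw [toBilin'_apply', toBilin'_apply', mulVec_mulVec]

theorem cliffEta_one_mul_cliffEta_two {r : ℕ} (hr : r % 2 = 0) :
    cliffEta r 1 1 * cliffEta r 2 2 = 1 := by
  rw [cliffEta, cliffEta, if_pos rfl, if_pos rfl]
  split_ifs <;> norm_num <;> omega

namespace IsCliffordSystem

variable {l s m r : ℕ} {P : ℕ → Matrix (Fin (2 * l)) (Fin (2 * l)) ℝ}

theorem mul_anticomm (hP : IsCliffordSystem l s m r P) {i j : ℕ} (hi : i ∈ Finset.Icc 1 m)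
    (hj : j ∈ Finset.Icc 1 m) (hij : i ≠ j) : P i * P j = -(P j * P i) := by
  have h := hP.2 i hi j hj
  rw [cliffEta, if_neg hij, mul_zero, zero_smul] at h
  exact eq_neg_of_add_eq_zero_left h

theorem mul_self (hP : IsCliffordSystem l s m r P) {i : ℕ} (hi : i ∈ Finset.Icc 1 m) :
    P i * P i = cliffEta r i i • 1 := by
  have h := hP.2 i hi i hi
  rw [← two_smul ℝ, mul_smul] at h
  exact smul_right_injective _ two_ne_zero h

theorem commute_mul_one_two (hP : IsCliffordSystem l s m r P) {j : ℕ}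
    (hj : j ∈ Finset.Icc 3 m) : Commute (P 1 * P 2) (P j) := by
  rw [Finset.mem_Icc] at hj
  have h₁ : 1 ∈ Finset.Icc 1 m := Finset.mem_Icc.2 ⟨le_rfl, by omega⟩
  have h₂ : 2 ∈ Finset.Icc 1 m := Finset.mem_Icc.2 ⟨by omega, by omega⟩
  have hj' : j ∈ Finset.Icc 1 m := Finset.mem_Icc.2 ⟨by omega, hj.2⟩
  calc P 1 * P 2 * P j = P 1 * -(P j * P 2) := by
        rw [Matrix.mul_assoc, hP.mul_anticomm h₂ hj' (by omega)]
    _ = -(P 1 * P j) * P 2 := by rw [Matrix.mul_neg, Matrix.neg_mul, Matrix.mul_assoc]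
    _ = P j * (P 1 * P 2) := by
        rw [hP.mul_anticomm h₁ hj' (by omega), neg_neg, Matrix.mul_assoc]

theorem commute_mul_one_two_prod (hP : IsCliffordSystem l s m r P) (hm : 2 ≤ m) :
    Commute (P 1 * P 2) ((List.range m).map fun k => P (1 + k)).prod := by
  obtain ⟨k, rfl⟩ : ∃ k, m = k + 2 := ⟨m - 2, by omega⟩
  simp only [List.range_succ_eq_map, List.map_cons, List.map_map, List.prod_cons,
    Function.comp_def, ← Matrix.mul_assoc]
  refine (Commute.refl _).mul_right (Commute.list_prod_right _ _ fun x hx => ?_)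
  obtain ⟨i, hi, rfl⟩ := List.mem_map.1 hx
  exact hP.commute_mul_one_two (Finset.mem_Icc.2 ⟨by omega, by simp at hi; omega⟩)

theorem transpose_mul_one_two (hP : IsCliffordSystem l s m r P) (hm : 2 ≤ m) :
    (P 1 * P 2)ᵀ = psJ (2 * l) s * (P 2 * P 1) * psJ (2 * l) s := by
  rw [transpose_mul, hP.1 2 (Finset.mem_Icc.2 ⟨by omega, hm⟩),
    hP.1 1 (Finset.mem_Icc.2 ⟨le_rfl, by omega⟩)]
  simp only [Matrix.mul_assoc, psJ_mul_psJ_mul]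

theorem transpose_psJ_mul_mul_one_two (hP : IsCliffordSystem l s m r P) (hm : 2 ≤ m) :
    (psJ (2 * l) s * (P 1 * P 2))ᵀ = -(psJ (2 * l) s * (P 1 * P 2)) := by
  rw [transpose_mul, hP.transpose_mul_one_two hm, psJ_transpose, Matrix.mul_assoc, psJ_mul_psJ,
    Matrix.mul_one, hP.mul_anticomm (Finset.mem_Icc.2 ⟨by omega, hm⟩)
      (Finset.mem_Icc.2 ⟨le_rfl, by omega⟩) (by omega), Matrix.mul_neg]

theorem transpose_mul_one_two_mul_psJ_mul (hP : IsCliffordSystem l s m r P) (hm : 2 ≤ m)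
    (hr : r % 2 = 0) : (P 1 * P 2)ᵀ * psJ (2 * l) s * (P 1 * P 2) = psJ (2 * l) s := by
  rw [hP.transpose_mul_one_two hm]
  simp only [Matrix.mul_assoc, psJ_mul_psJ_mul]
  rw [← Matrix.mul_assoc (P 1), hP.mul_self (Finset.mem_Icc.2 ⟨le_rfl, by omega⟩),
    Matrix.smul_mul, Matrix.one_mul, Matrix.mul_smul, hP.mul_self (Finset.mem_Icc.2 ⟨by omega, hm⟩),
    smul_smul, cliffEta_one_mul_cliffEta_two hr, one_smul, Matrix.mul_one]

end IsCliffordSystem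

theorem eigensphere_pathConnected_general (l s m r : ℕ)
    (hm : 2 ≤ m) (hr2 : r % 2 = 0)
    (P : ℕ → Matrix (Fin (2 * l)) (Fin (2 * l)) ℝ)
    (hP : IsCliffordSystem l s m r P)
    (Pm : Matrix (Fin (2 * l)) (Fin (2 * l)) ℝ)
    (hPm : Pm = ((List.range m).map fun k => P (1 + k)).prod)
    (ε : ℝ)
    (hne : ({z | Pm *ᵥ z = ε • z ∧ psInner (2 * l) s z z = 1} :
      Set (Fin (2 * l) → ℝ)).Nonempty) :
    IsPathConnected ({z | Pm *ᵥ z = ε • z ∧ psInner (2 * l) s z z = 1} :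
      Set (Fin (2 * l) → ℝ)) := by
  have hS : {z | Pm *ᵥ z = ε • z ∧ psInner (2 * l) s z z = 1}
      = pseudoSphere (psJ (2 * l) s).toBilin' (Module.End.eigenspace (toLin' Pm) ε) := by
    ext z
    simp only [Set.mem_ofPred_eq, mem_pseudoSphere, Module.End.mem_eigenspace_iff, toLin'_apply,
      toBilin'_psJ_eq_psInner]
  rw [hS] at hne ⊢
  refine isPathConnected_pseudoSphere isSymm_toBilin'_psJ hne
    fun x hx => ⟨(P 1 * P 2) *ᵥ x, ⟨?_, ?_⟩, ?_⟩
  · have hcomm := (hP.commute_mul_one_two_prod hm).eq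
    rw [← hPm] at hcomm
    rw [Module.End.mem_eigenspace_iff, toLin'_apply, mulVec_mulVec, ← hcomm, ← mulVec_mulVec,
      ← toLin'_apply Pm, Module.End.mem_eigenspace_iff.1 hx.1, mulVec_smul]
  · rw [toBilin'_mulVec_mulVec, hP.transpose_mul_one_two_mul_psJ_mul hm hr2]
    exact hx.2
  · rw [toBilin'_mulVec_right]
    exact toBilin'_self_eq_zero_of_transpose_eq_neg (hP.transpose_psJ_mul_mul_one_two hm) x

/-- for a Clifford system with `m ≡ 0 (mod 4)`, `r ≡ 0 (mod 2)`,
`s ≤ 2l - 1`, and `P = P_1 ⋯ P_m`: for `ε ∈ {-1, 1}`, if `E_ε(P) ∩ S^{2l-1}_s ≠ ∅`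
then `E_ε(P) ∩ S^{2l-1}_s` is path-connected. -/
theorem eigensphere_pathConnected (l s m r : ℕ) (hl : 0 < l) (hs : s ≤ 2 * l - 1)
    (hm : 2 ≤ m) (hm4 : m % 4 = 0) (hr : r ≤ m) (hr2 : r % 2 = 0)
    (P : ℕ → Matrix (Fin (2 * l)) (Fin (2 * l)) ℝ)
    (hP : IsCliffordSystem l s m r P)
    (Pm : Matrix (Fin (2 * l)) (Fin (2 * l)) ℝ)
    (hPm : Pm = ((List.range m).map fun k => P (1 + k)).prod)
    (ε : ℝ) (hε : ε = 1 ∨ ε = -1)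
    (hne : ({z | Pm *ᵥ z = ε • z ∧ psInner (2 * l) s z z = 1} :
      Set (Fin (2 * l) → ℝ)).Nonempty) :
    IsPathConnected ({z | Pm *ᵥ z = ε • z ∧ psInner (2 * l) s z z = 1} :
      Set (Fin (2 * l) → ℝ)) :=
  eigensphere_pathConnected_general l s m r hm hr2 P hP Pm hPm ε hne
end
end
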